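/- Let G = (g₁, g₂) be a pair of polynomials with integer coefficients, let m₁, m₂ ∈ ℕ, m := lcm[m₁, m₂], and M ∈ ℕ with m ∣ M. Then (1/φ(M)) · ∑_{1 ≤ k ≤ M, gcd(k,M)=1} gcd(g₁(k), m₁) · gcd(g₂(k), m₂) = ∑_{d₁ ∣ m₁, d₂ ∣ m₂} φ(gcd(d₁, d₂)) · η_G(d₁, d₂). -/

import Mathlib

/-!
Writing `gcd(a, m) = ∑_{d ∣ gcd(a, m)} φ(d)` turns the left-hand side into
`∑_{d₁ ∣ m₁, d₂ ∣ m₂} φ(d₁) φ(d₂) N(d₁, d₂)`, where `N(d₁, d₂)` counts the units `k` modulo `M`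
with `d₁ ∣ g₁(k)` and `d₂ ∣ g₂(k)`. This condition only depends on `k` modulo `l = lcm[d₁, d₂]`,
and reduction `(ℤ/M)ˣ → (ℤ/l)ˣ` is a surjective homomorphism, so all its fibres have
`φ(M)/φ(l)` elements and `N(d₁, d₂) = η_G(d₁, d₂) φ(M)/φ(l)`. Finally
`φ(d₁) φ(d₂) = φ(gcd(d₁, d₂)) φ(lcm[d₁, d₂])`.
-/

open Finset

/-- `eta2 g₁ g₂ d₁ d₂` is the number of residues `x` modulo `lcm[d₁, d₂]` satisfying
`g₁(x) ≡ 0 (mod d₁)`, `g₂(x) ≡ 0 (mod d₂)`, `gcd(x, d₁) = 1` and `gcd(x, d₂) = 1`. -/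
def eta2 (g₁ g₂ : Polynomial ℤ) (d₁ d₂ : ℕ) : ℕ :=
  ((Finset.range (Nat.lcm d₁ d₂)).filter
    (fun x : ℕ => (d₁ : ℤ) ∣ g₁.eval (x : ℤ) ∧ (d₂ : ℤ) ∣ g₂.eval (x : ℤ) ∧
      Nat.gcd x d₁ = 1 ∧ Nat.gcd x d₂ = 1)).card

open Function Polynomial
open scoped Nat

theorem Nat.coprime_lcm_right_iff {x a b : ℕ} :
    x.Coprime (a.lcm b) ↔ x.Coprime a ∧ x.Coprime b :=
  ⟨fun h => ⟨h.coprime_dvd_right (Nat.dvd_lcm_left a b),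
      h.coprime_dvd_right (Nat.dvd_lcm_right a b)⟩,
    fun ⟨ha, hb⟩ => (ha.mul_right hb).coprime_dvd_right (Nat.lcm_dvd_mul a b)⟩

theorem Nat.totient_mul_totient (a b : ℕ) :
    φ a * φ b = φ (a.gcd b) * φ (a.lcm b) := by
  rcases Nat.eq_zero_or_pos (a.gcd b) with h | h
  · obtain ⟨rfl, rfl⟩ := Nat.gcd_eq_zero_iff.mp h
    simp
  refine Nat.eq_of_mul_eq_mul_right h ?_
  have hlcm := Nat.totient_gcd_mul_totient_mul (a.gcd b) (a.lcm b)
  rw [Nat.gcd_eq_left ((Nat.gcd_dvd_left a b).trans (Nat.dvd_lcm_left a b)),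
    Nat.gcd_mul_lcm] at hlcm
  rw [← Nat.totient_gcd_mul_totient_mul, hlcm]

theorem Int.gcd_natCast_eq_sum_totient (a : ℤ) {m : ℕ} (hm : m ≠ 0) :
    a.gcd m = ∑ d ∈ m.divisors with ((d : ℕ) : ℤ) ∣ a, φ d := by
  have hdiv : (a.gcd m).divisors = {d ∈ m.divisors | ((d : ℕ) : ℤ) ∣ a} := by
    ext d
    simp only [Nat.mem_divisors, mem_filter, Int.gcd_eq_natAbs_gcd_natAbs, Int.natAbs_natCast,
      Nat.dvd_gcd_iff, Int.natCast_dvd, ne_eq, Nat.gcd_eq_zero_iff, hm, and_false,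
      not_false_eq_true, and_true]
    tauto
  rw [← hdiv, Nat.sum_totient]

theorem Polynomial.periodic_natCast_dvd_eval (g : ℤ[X]) {d n : ℕ} (h : d ∣ n) :
    Periodic (fun k : ℕ => (d : ℤ) ∣ g.eval (k : ℤ)) n := fun k => by
  have hsub : (d : ℤ) ∣ g.eval ((k + n : ℕ) : ℤ) - g.eval (k : ℤ) :=
    (Int.natCast_dvd_natCast.mpr h).trans (by simpa using sub_dvd_eval_sub ((k + n : ℕ) : ℤ) k g)
  exact propext (dvd_iff_dvd_of_dvd_sub hsub)

theorem MonoidHom.card_filter_comp_mul_card {G H : Type*} [Group G] [Group H] [Fintype G]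
    [Fintype H] [DecidableEq H] (f : G →* H) (hf : Surjective f) (p : H → Prop)
    [DecidablePred p] :
    #{g | p (f g)} * Fintype.card H = #{h | p h} * Fintype.card G := by
  have hfiber : ∀ h, #{g | f g = h} = #{g | f g = 1} := fun h =>
    card_fiber_eq_of_mem_range f (hf h) (hf 1)
  have hcomp : #{g | p (f g)} = #{h | p h} * #{g | f g = 1} := by
    rw [card_eq_sum_card_fiberwise (f := f) (t := {h | p h}) (fun g hg => by simpa using hg)]
    refine sum_const_nat fun h hh => ?_
    rw [← hfiber h, filter_filter]
    congr 1
    ext g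
    simp only [mem_filter, mem_univ, true_and, and_iff_right_iff_imp]
    rintro rfl
    simpa using hh
  have hG : Fintype.card G = Fintype.card H * #{g | f g = 1} := by
    rw [← Finset.card_univ,
      card_eq_sum_card_fiberwise (f := f) (t := univ) (fun _ _ => mem_univ _)]
    simp [hfiber]
  rw [hcomp, hG]
  ring

theorem ZMod.card_units_filter_val {n : ℕ} [NeZero n] (p : ℕ → Prop) [DecidablePred p] :
    #{u : (ZMod n)ˣ | p (u : ZMod n).val} = #{k ∈ range n | k.Coprime n ∧ p k} := by
  refine card_bij (fun u _ => (u : ZMod n).val) ?_ ?_ ?_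
  · intro u hu
    simp only [mem_filter, mem_univ, true_and, mem_range] at hu ⊢
    exact ⟨ZMod.val_lt _, ZMod.val_coe_unit_coprime u, hu⟩
  · intro u _ v _ huv
    exact Units.ext (ZMod.val_injective n huv)
  · intro k hk
    simp only [mem_filter, mem_range] at hk
    have hval : ((k : ZMod n)).val = k := by rw [ZMod.val_natCast, Nat.mod_eq_of_lt hk.1]
    exact ⟨ZMod.unitOfCoprime k hk.2.1, by simpa [hval] using hk.2.2, hval⟩

theorem card_filter_coprime_range_mul_totient {l M : ℕ} (hM : M ≠ 0) (hl : l ∣ M)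
    (p : ℕ → Prop) [DecidablePred p] (hp : Periodic p l) :
    #{k ∈ range M | k.Coprime M ∧ p k} * φ l = #{x ∈ range l | x.Coprime l ∧ p x} * φ M := by
  have : NeZero M := ⟨hM⟩
  have : NeZero l := ⟨ne_zero_of_dvd_ne_zero hM hl⟩
  have hval : ∀ u : (ZMod M)ˣ, p (u : ZMod M).val ↔ p (ZMod.unitsMap hl u : ZMod l).val := by
    intro u
    rw [ZMod.unitsMap_val, ZMod.cast_eq_val, ZMod.val_natCast, hp.map_mod_nat]
  rw [← ZMod.card_units_filter_val, ← ZMod.card_units_filter_val, ← ZMod.card_units_eq_totient l,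
    ← ZMod.card_units_eq_totient M, filter_congr fun u _ => hval u]
  exact (ZMod.unitsMap hl).card_filter_comp_mul_card (ZMod.unitsMap_surjective hl)
    (fun v => p (v : ZMod l).val)

theorem card_filter_coprime_Icc_mul_totient {l M : ℕ} (hM : M ≠ 0) (hl : l ∣ M)
    (p : ℕ → Prop) [DecidablePred p] (hp : Periodic p l) :
    #{k ∈ Icc 1 M | k.Coprime M ∧ p k} * φ l = #{x ∈ range l | x.Coprime l ∧ p x} * φ M := by
  have hpM : Periodic p M := by
    obtain ⟨c, rfl⟩ := hl
    simpa [mul_comm] using hp.nat_mul c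
  have hq : Periodic (fun k => k.Coprime M ∧ p k) M := fun k => by
    simp only [Nat.coprime_add_self_left, hpM k]
  rw [← Ico_add_one_right_eq_Icc, add_comm M 1, Nat.filter_Ico_card_eq_of_periodic 1 M _ hq,
    Nat.count_eq_card_filter_range]
  exact card_filter_coprime_range_mul_totient hM hl p hp

theorem eta2_eq_card (g₁ g₂ : ℤ[X]) (d₁ d₂ : ℕ) :
    eta2 g₁ g₂ d₁ d₂ = #{x ∈ range (d₁.lcm d₂) | Nat.Coprime x (d₁.lcm d₂) ∧
      ((d₁ : ℤ) ∣ g₁.eval (x : ℤ) ∧ (d₂ : ℤ) ∣ g₂.eval (x : ℤ))} := by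
  unfold eta2
  congr 1
  refine filter_congr fun x _ => ?_
  rw [Nat.coprime_lcm_right_iff, Nat.coprime_iff_gcd_eq_one, Nat.coprime_iff_gcd_eq_one]
  tauto

theorem card_filter_dvd_eval_mul_totient_mul_totient (g₁ g₂ : ℤ[X]) {d₁ d₂ M : ℕ} (hM : M ≠ 0)
    (h : d₁.lcm d₂ ∣ M) :
    #{k ∈ Icc 1 M | Nat.Coprime k M ∧ ((d₁ : ℤ) ∣ g₁.eval (k : ℤ) ∧ (d₂ : ℤ) ∣ g₂.eval (k : ℤ))} *
        (φ d₁ * φ d₂) = φ M * (φ (d₁.gcd d₂) * eta2 g₁ g₂ d₁ d₂) := by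
  have hp : Periodic (fun k : ℕ => (d₁ : ℤ) ∣ g₁.eval (k : ℤ) ∧ (d₂ : ℤ) ∣ g₂.eval (k : ℤ))
      (d₁.lcm d₂) := fun k =>
    congrArg₂ And (g₁.periodic_natCast_dvd_eval (Nat.dvd_lcm_left d₁ d₂) k)
      (g₂.periodic_natCast_dvd_eval (Nat.dvd_lcm_right d₁ d₂) k)
  rw [Nat.totient_mul_totient, mul_left_comm, card_filter_coprime_Icc_mul_totient hM h _ hp,
    eta2_eq_card]
  ring

theorem sum_gcd_eval_mul_gcd_eval (g₁ g₂ : ℤ[X]) {m₁ m₂ M : ℕ} (h₁ : m₁ ≠ 0) (h₂ : m₂ ≠ 0)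
    (hM0 : M ≠ 0) (hM : m₁.lcm m₂ ∣ M) :
    ∑ k ∈ Icc 1 M with k.gcd M = 1, (g₁.eval (k : ℤ)).gcd m₁ * (g₂.eval (k : ℤ)).gcd m₂ =
      φ M * ∑ d₁ ∈ m₁.divisors, ∑ d₂ ∈ m₂.divisors, φ (d₁.gcd d₂) * eta2 g₁ g₂ d₁ d₂ := by
  calc _ = ∑ k ∈ Icc 1 M with k.gcd M = 1, ∑ d₁ ∈ m₁.divisors, ∑ d₂ ∈ m₂.divisors,
        if (d₁ : ℤ) ∣ g₁.eval (k : ℤ) ∧ (d₂ : ℤ) ∣ g₂.eval (k : ℤ) then φ d₁ * φ d₂ else 0 := by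
        refine sum_congr rfl fun k _ => ?_
        simp only [Int.gcd_natCast_eq_sum_totient _ h₁, Int.gcd_natCast_eq_sum_totient _ h₂,
          sum_filter, sum_mul_sum, ite_zero_mul_ite_zero]
    _ = ∑ d₁ ∈ m₁.divisors, ∑ d₂ ∈ m₂.divisors, #{k ∈ Icc 1 M | Nat.Coprime k M ∧
          ((d₁ : ℤ) ∣ g₁.eval (k : ℤ) ∧ (d₂ : ℤ) ∣ g₂.eval (k : ℤ))} * (φ d₁ * φ d₂) := by
        rw [sum_comm]
        refine sum_congr rfl fun d₁ _ => ?_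
        rw [sum_comm]
        refine sum_congr rfl fun d₂ _ => ?_
        rw [← sum_filter, sum_const, smul_eq_mul, filter_filter]
    _ = _ := by
        rw [mul_sum]
        refine sum_congr rfl fun d₁ hd₁ => ?_
        rw [mul_sum]
        refine sum_congr rfl fun d₂ hd₂ => ?_
        have hlcm : d₁.lcm d₂ ∣ m₁.lcm m₂ :=
          Nat.lcm_dvd ((Nat.dvd_of_mem_divisors hd₁).trans (Nat.dvd_lcm_left m₁ m₂))
            ((Nat.dvd_of_mem_divisors hd₂).trans (Nat.dvd_lcm_right m₁ m₂))
        exact card_filter_dvd_eval_mul_totient_mul_totient g₁ g₂ hM0 (hlcm.trans hM)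

theorem stmt12 (g₁ g₂ : Polynomial ℤ) (m₁ m₂ : ℕ) (h₁ : 0 < m₁) (h₂ : 0 < m₂)
    (M : ℕ) (hM0 : 0 < M) (hM : Nat.lcm m₁ m₂ ∣ M) :
    (1 / (Nat.totient M : ℚ)) *
        ∑ k ∈ (Finset.Icc 1 M).filter (fun k => Nat.gcd k M = 1),
          ((Int.gcd (g₁.eval (k : ℤ)) m₁ * Int.gcd (g₂.eval (k : ℤ)) m₂ : ℕ) : ℚ) =
      ∑ d₁ ∈ m₁.divisors, ∑ d₂ ∈ m₂.divisors,
        (Nat.totient (Nat.gcd d₁ d₂) : ℚ) * (eta2 g₁ g₂ d₁ d₂ : ℚ) := by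
  have hφ : (φ M : ℚ) ≠ 0 := by exact_mod_cast (Nat.totient_pos.mpr hM0).ne'
  rw [← Nat.cast_sum, sum_gcd_eval_mul_gcd_eval g₁ g₂ h₁.ne' h₂.ne' hM0.ne' hM]
  push_cast
  field_simp
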